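/- For ε_t ∈ (0,1) and β_t = (1/2)·log((1-ε_t)/ε_t), and weak learner predictions h_t(x) ∈ {-1,1}, the sigmoid of the ensemble output equals the product-of-experts form: 1/(1 + exp(-2·Σ_t β_t h_t(x))) = Π_t p_t(x) / (Π_t p_t(x) + Π_t (1 - p_t(x))), where p_t(x) = 1 - ε_t if h_t(x) = 1 and p_t(x) = ε_t if h_t(x) = -1. -/
import Mathlib


theorem sigmoid_product_of_experts (T : ℕ) (hT : 1 ≤ T)
    (ε : Fin T → ℝ) (hε : ∀ t, 0 < ε t ∧ ε t < 1)
    (h : Fin T → ℝ) (hh : ∀ t, h t = 1 ∨ h t = -1)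
    (β : Fin T → ℝ) (hβ : ∀ t, β t = (1/2) * Real.log ((1 - ε t) / ε t))
    (F : ℝ) (hF : F = ∑ t, β t * h t)
    (p : Fin T → ℝ) (hp : ∀ t, p t = if h t = 1 then 1 - ε t else ε t) :
    1 / (1 + Real.exp (-2 * F)) =
      (∏ t, p t) / ((∏ t, p t) + ∏ t, (1 - p t)) := by
  have hp0 : ∀ t, 0 < p t := by
    intro t
    rw [hp t]
    rcases hh t with h1 | h1 <;> rw [h1] <;> norm_num <;>
      [skip; exact (hε t).1] <;> linarith [(hε t).2]
  have hp1 : ∀ t, p t < 1 := by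
    intro t
    rw [hp t]
    rcases hh t with h1 | h1 <;> rw [h1] <;> norm_num <;>
      [linarith [(hε t).1]; exact (hε t).2]
  have hA : 0 < ∏ t, p t := Finset.prod_pos (fun t _ => hp0 t)
  have hB : 0 < ∏ t, (1 - p t) := Finset.prod_pos (fun t _ => by linarith [hp1 t])
  have key : Real.exp (-2 * F) = (∏ t, (1 - p t)) / (∏ t, p t) := by
    rw [hF, Finset.mul_sum, Real.exp_sum, ← Finset.prod_div_distrib]
    refine Finset.prod_congr rfl fun t _ => ?_
    have he0 := (hε t).1
    have he1 := (hε t).2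
    have hlog : Real.exp (Real.log ((1 - ε t) / ε t)) = (1 - ε t) / ε t :=
      Real.exp_log (div_pos (by linarith) he0)
    rcases hh t with h1 | h1
    · have heq : -2 * (β t * h t) = -Real.log ((1 - ε t) / ε t) := by
        rw [hβ t, h1]; ring
      rw [heq, Real.exp_neg, hlog, hp t, if_pos h1]
      rw [inv_div]
      congr 1
      ring
    · have heq : -2 * (β t * h t) = Real.log ((1 - ε t) / ε t) := by
        rw [hβ t, h1]; ring
      rw [heq, hlog, hp t, if_neg (by rw [h1]; norm_num)]
  rw [key]
  have h2 : 1 + (∏ t, (1 - p t)) / (∏ t, p t) =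
      ((∏ t, p t) + ∏ t, (1 - p t)) / (∏ t, p t) := by
    field_simp
  rw [h2, one_div_div]
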